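/- arXiv:1903.07696 — 7 statements merged into one kernel-verified Lean document; each statement's English description precedes it below -/
import Mathlib

section
/- Let X ∈ ℝ^{m×ρ}, Ψ ∈ ℝ^{n×ρ} with orthonormal columns, and suppose X = Y Ψ where Y^T Y = A is invertible and X^T X is invertible. Then the minimizer r of ‖X r − (Y^T)^† b‖² satisfies r = Ψ^T u + (Ψ^T A Ψ)^{−1} Ψ^T A (I − Ψ Ψ^T) u, where u = A^{−1} b. -/
open Matrix Finset

/-! The minimiser of a full-rank least-squares problem is `r = (XᵀX)⁻¹ Xᵀ c`, by the Pythagorean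
splitting of the residual at the solution of the normal equations. With `c = Y A⁻¹ b` and
`X = YΨ` one gets `XᵀX = ΨᵀAΨ` and `Xᵀc = ΨᵀAA⁻¹b = ΨᵀA u`, and the claimed formula is
`(ΨᵀAΨ)⁻¹ ΨᵀA u` rewritten via `ΨᵀA(1 - ΨΨᵀ) = ΨᵀA - (ΨᵀAΨ)Ψᵀ`. -/

namespace Matrix

variable {R : Type*} {m n : Type*} [Fintype m] [Fintype n]

lemma residual_dotProduct_self_eq_add_of_normal_eq [CommRing R] (X : Matrix m n R)
    (c : m → R) {r₀ : n → R} (hr₀ : Xᵀ *ᵥ (X *ᵥ r₀ - c) = 0) (s : n → R) :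
    (X *ᵥ s - c) ⬝ᵥ (X *ᵥ s - c) =
      (X *ᵥ r₀ - c) ⬝ᵥ (X *ᵥ r₀ - c) + (X *ᵥ (s - r₀)) ⬝ᵥ (X *ᵥ (s - r₀)) := by
  have hcross : (X *ᵥ (s - r₀)) ⬝ᵥ (X *ᵥ r₀ - c) = 0 := by
    rw [dotProduct_comm, ← dotProduct_transpose_mulVec, hr₀, dotProduct_zero]
  have hsplit : X *ᵥ s - c = (X *ᵥ r₀ - c) + X *ᵥ (s - r₀) := by
    rw [mulVec_sub]; abel
  rw [hsplit, add_dotProduct, dotProduct_add, dotProduct_add,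
    dotProduct_comm (X *ᵥ r₀ - c) (X *ᵥ (s - r₀)), hcross]
  ring

lemma add_nonsing_inv_mul_sub_mul [CommRing R] [DecidableEq n] {k : Type*} (B : Matrix n n R)
    (hB : IsUnit B.det) (P M : Matrix n k R) : P + B⁻¹ * (M - B * P) = B⁻¹ * M := by
  rw [Matrix.mul_sub, nonsing_inv_mul_cancel_left _ _ hB]
  abel

variable [Field R] [LinearOrder R] [IsStrictOrderedRing R] [DecidableEq n]

lemma eq_inv_mulVec_of_isLeast_residual (X : Matrix m n R) (hX : IsUnit (Xᵀ * X).det)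
    (c : m → R) {r : n → R}
    (hr : ∀ s, (X *ᵥ r - c) ⬝ᵥ (X *ᵥ r - c) ≤ (X *ᵥ s - c) ⬝ᵥ (X *ᵥ s - c)) :
    r = (Xᵀ * X)⁻¹ *ᵥ (Xᵀ *ᵥ c) := by
  set r₀ := (Xᵀ * X)⁻¹ *ᵥ (Xᵀ *ᵥ c)
  have hnormal : Xᵀ *ᵥ (X *ᵥ r₀ - c) = 0 := by
    rw [mulVec_sub, mulVec_mulVec, mulVec_mulVec, mul_nonsing_inv _ hX, one_mulVec, sub_self]
  have hpyth := residual_dotProduct_self_eq_add_of_normal_eq X c hnormal r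
  have hdiff : X *ᵥ (r - r₀) = 0 := by
    rw [← dotProduct_self_eq_zero]
    refine le_antisymm ?_ (Fintype.sum_nonneg fun _ => mul_self_nonneg _)
    linarith [hr r₀]
  have hgram : (Xᵀ * X) *ᵥ (r - r₀) = 0 := by
    rw [← mulVec_mulVec, hdiff, mulVec_zero]
  rw [← sub_eq_zero, ← mulVec_injective_iff_isUnit.mpr ((isUnit_iff_isUnit_det _).mpr hX) |>.eq_iff,
    hgram, mulVec_zero]

end Matrix

theorem stmt1_general {m n ρ : ℕ}
    (Y : Matrix (Fin m) (Fin n) ℝ)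
    (Ψ : Matrix (Fin n) (Fin ρ) ℝ)
    (A : Matrix (Fin n) (Fin n) ℝ) (hA : A = Yᵀ * Y)
    (X : Matrix (Fin m) (Fin ρ) ℝ) (hX : X = Y * Ψ)
    (hXinv : IsUnit (Xᵀ * X).det)
    (b u : Fin n → ℝ) (hu : u = A⁻¹ *ᵥ b)
    (r : Fin ρ → ℝ)
    (hr : ∀ s : Fin ρ → ℝ,
      ∑ i, (X *ᵥ r - (Y * (Yᵀ * Y)⁻¹) *ᵥ b) i ^ 2 ≤
        ∑ i, (X *ᵥ s - (Y * (Yᵀ * Y)⁻¹) *ᵥ b) i ^ 2) :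
    r = Ψᵀ *ᵥ u + ((Ψᵀ * A * Ψ)⁻¹ * (Ψᵀ * A * (1 - Ψ * Ψᵀ))) *ᵥ u := by
  have hgram : Xᵀ * X = Ψᵀ * A * Ψ := by
    simp only [hX, hA, transpose_mul, Matrix.mul_assoc]
  have hrhs : Xᵀ *ᵥ ((Y * (Yᵀ * Y)⁻¹) *ᵥ b) = (Ψᵀ * A) *ᵥ u := by
    rw [hu, mulVec_mulVec, mulVec_mulVec, hX, transpose_mul, Matrix.mul_assoc, Matrix.mul_assoc,
      ← Matrix.mul_assoc Yᵀ, ← hA]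
  have hproj : Ψᵀ * A * (1 - Ψ * Ψᵀ) = Ψᵀ * A - Ψᵀ * A * Ψ * Ψᵀ := by
    rw [Matrix.mul_sub, Matrix.mul_one, Matrix.mul_assoc (Ψᵀ * A)]
  have hls := eq_inv_mulVec_of_isLeast_residual X hXinv ((Y * (Yᵀ * Y)⁻¹) *ᵥ b)
    (by simpa only [dotProduct, sq] using hr)
  rw [hls, hrhs, hgram, mulVec_mulVec, ← add_mulVec, hproj,
    add_nonsing_inv_mul_sub_mul _ (hgram ▸ hXinv)]

/-- the minimizer `r` of `‖X r − (Yᵀ)† b‖²` satisfies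
`r = Ψᵀ u + (Ψᵀ A Ψ)⁻¹ Ψᵀ A (I − Ψ Ψᵀ) u` with `u = A⁻¹ b`, where `(Yᵀ)† = Y (Yᵀ Y)⁻¹`. -/
theorem stmt1 {m n ρ : ℕ}
    (Y : Matrix (Fin m) (Fin n) ℝ)
    (Ψ : Matrix (Fin n) (Fin ρ) ℝ) (hΨ : Ψᵀ * Ψ = 1)
    (A : Matrix (Fin n) (Fin n) ℝ) (hA : A = Yᵀ * Y) (hAinv : IsUnit A.det)
    (X : Matrix (Fin m) (Fin ρ) ℝ) (hX : X = Y * Ψ)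
    (hXinv : IsUnit (Xᵀ * X).det)
    (b u : Fin n → ℝ) (hu : u = A⁻¹ *ᵥ b)
    (r : Fin ρ → ℝ)
    (hr : ∀ s : Fin ρ → ℝ,
      ∑ i, (X *ᵥ r - (Y * (Yᵀ * Y)⁻¹) *ᵥ b) i ^ 2 ≤
        ∑ i, (X *ᵥ s - (Y * (Yᵀ * Y)⁻¹) *ᵥ b) i ^ 2) :
    r = Ψᵀ *ᵥ u + ((Ψᵀ * A * Ψ)⁻¹ * (Ψᵀ * A * (1 - Ψ * Ψᵀ))) *ᵥ u :=
  stmt1_general Y Ψ A hA X hX hXinv b u hu r hr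
end

section
/- With the same setup (X = Y Ψ, Y = Z^{1/2} D with D of full column rank, Z positive diagonal, A = Y^T Y invertible, X^T X invertible), the minimizer of ‖X r − Z^{−1/2}(D^T)^† b‖² equals the minimizer of ‖X r − (Y^T)^† b‖²; both equal (X^T X)^{−1} Ψ^T b. -/
/-!
A least-squares minimizer of `‖X r - w‖²` with `XᵀX` invertible solves the normal equations
`XᵀX r = Xᵀ w`, so it depends on the target `w` only through `Xᵀ w`. Both targets have the same
image `Ψᵀ b` under `Xᵀ = Ψᵀ Dᵀ Z^{1/2}`: for the first, `Z^{1/2}` cancels `Z^{-1/2}` and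
`Dᵀ D (Dᵀ D)⁻¹ = 1`; for the second, `Yᵀ Y (Yᵀ Y)⁻¹ = 1`.
-/

open Matrix Finset

namespace Matrix

variable {ι κ R : Type*} [Fintype κ]

theorem ker_mulVecLin_eq_bot_of_rank_eq [Field R] (A : Matrix ι κ R)
    (h : A.rank = Fintype.card κ) : LinearMap.ker A.mulVecLin = ⊥ := by
  have := A.mulVecLin.finrank_range_add_finrank_ker
  rw [← rank, h, Module.finrank_fintype_fun_eq_card] at this
  exact Submodule.finrank_eq_zero.mp (by omega)

theorem isUnit_transpose_mul_self_of_rank_eq [Fintype ι] [DecidableEq κ] [Field R]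
    [LinearOrder R] [IsStrictOrderedRing R] (A : Matrix ι κ R) (h : A.rank = Fintype.card κ) :
    IsUnit (Aᵀ * A) := by
  rw [← mulVec_injective_iff_isUnit, ← coe_mulVecLin, ← LinearMap.ker_eq_bot,
    ker_mulVecLin_transpose_mul_self, A.ker_mulVecLin_eq_bot_of_rank_eq h]

theorem transpose_mul_mul_nonsing_inv_transpose_mul_self [Fintype ι] [DecidableEq κ] [CommRing R]
    (A : Matrix ι κ R) (hA : IsUnit (Aᵀ * A).det) : Aᵀ * (A * (Aᵀ * A)⁻¹) = 1 := by
  rw [← Matrix.mul_assoc, mul_nonsing_inv _ hA]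

end Matrix

section LeastSquares

variable {ι κ R : Type*} [Fintype ι] [Fintype κ]

theorem sum_sq_add_of_dotProduct_eq_zero [CommSemiring R] {u v : ι → R} (h : u ⬝ᵥ v = 0) :
    ∑ i, (u + v) i ^ 2 = ∑ i, u i ^ 2 + ∑ i, v i ^ 2 := by
  have h' : ∑ i, u i * v i = 0 := h
  simp only [Pi.add_apply, add_sq, sum_add_distrib, mul_assoc, ← mul_sum, h', mul_zero, add_zero]

theorem sum_sq_mulVec_sub_eq_of_transpose_mulVec_eq_zero [CommRing R] {X : Matrix ι κ R}
    {w : ι → R} {r : κ → R} (h : Xᵀ *ᵥ (X *ᵥ r - w) = 0) (s : κ → R) :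
    ∑ i, (X *ᵥ s - w) i ^ 2 = ∑ i, (X *ᵥ (s - r)) i ^ 2 + ∑ i, (X *ᵥ r - w) i ^ 2 := by
  have horth : X *ᵥ (s - r) ⬝ᵥ (X *ᵥ r - w) = 0 := by
    rw [dotProduct_comm, dotProduct_mulVec, ← mulVec_transpose, h, zero_dotProduct]
  rw [← sum_sq_add_of_dotProduct_eq_zero horth, mulVec_sub, sub_add_sub_cancel]

variable [Field R] [LinearOrder R] [IsStrictOrderedRing R]

def IsLeastSquaresSolution (X : Matrix ι κ R) (w : ι → R) (r : κ → R) : Prop :=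
  ∀ s, ∑ i, (X *ᵥ r - w) i ^ 2 ≤ ∑ i, (X *ᵥ s - w) i ^ 2

theorem IsLeastSquaresSolution.eq_nonsing_inv_mulVec [DecidableEq κ] {X : Matrix ι κ R}
    {w : ι → R} {r : κ → R} (hX : IsUnit (Xᵀ * X).det) (hr : IsLeastSquaresSolution X w r) :
    r = (Xᵀ * X)⁻¹ *ᵥ (Xᵀ *ᵥ w) := by
  set r₀ := (Xᵀ * X)⁻¹ *ᵥ (Xᵀ *ᵥ w)
  have hnormal : Xᵀ *ᵥ (X *ᵥ r₀) = Xᵀ *ᵥ w := by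
    rw [mulVec_mulVec, mulVec_mulVec, mul_nonsing_inv _ hX, one_mulVec]
  have hpyth := sum_sq_mulVec_sub_eq_of_transpose_mulVec_eq_zero
    (by rw [mulVec_sub, hnormal, sub_self] : Xᵀ *ᵥ (X *ᵥ r₀ - w) = 0) r
  have hsq : ∑ i, (X *ᵥ (r - r₀)) i ^ 2 = 0 :=
    le_antisymm (by linarith [hr r₀]) (sum_nonneg fun i _ ↦ sq_nonneg _)
  have hXr : X *ᵥ r = X *ᵥ r₀ := by
    rw [← sub_eq_zero, ← mulVec_sub]
    ext i
    simpa using (sum_eq_zero_iff_of_nonneg fun j _ ↦ sq_nonneg _).mp hsq i (mem_univ i)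
  calc r = (Xᵀ * X)⁻¹ *ᵥ ((Xᵀ * X) *ᵥ r) := by
        rw [mulVec_mulVec, nonsing_inv_mul _ hX, one_mulVec]
    _ = r₀ := by rw [← mulVec_mulVec, hXr, hnormal]

end LeastSquares

theorem stmt2_general {m n ρ : ℕ} (z : Fin m → ℝ) (hz : ∀ i, 0 < z i)
    (D : Matrix (Fin m) (Fin n) ℝ) (hD : D.rank = n)
    (Y : Matrix (Fin m) (Fin n) ℝ)
    (hY : Y = Matrix.diagonal (fun i => Real.sqrt (z i)) * D)
    (Ψ : Matrix (Fin n) (Fin ρ) ℝ)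
    (hAinv : IsUnit (Yᵀ * Y).det)
    (X : Matrix (Fin m) (Fin ρ) ℝ) (hX : X = Y * Ψ)
    (hXinv : IsUnit (Xᵀ * X).det)
    (b : Fin n → ℝ)
    (w₁ w₂ : Fin m → ℝ)
    (hw₁ : w₁ = (Matrix.diagonal (fun i => (Real.sqrt (z i))⁻¹) * (D * (Dᵀ * D)⁻¹)) *ᵥ b)
    (hw₂ : w₂ = (Y * (Yᵀ * Y)⁻¹) *ᵥ b)
    (r₁ r₂ : Fin ρ → ℝ)
    (hr₁ : ∀ s : Fin ρ → ℝ, ∑ i, (X *ᵥ r₁ - w₁) i ^ 2 ≤ ∑ i, (X *ᵥ s - w₁) i ^ 2)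
    (hr₂ : ∀ s : Fin ρ → ℝ, ∑ i, (X *ᵥ r₂ - w₂) i ^ 2 ≤ ∑ i, (X *ᵥ s - w₂) i ^ 2) :
    r₁ = r₂ ∧ r₁ = (Xᵀ * X)⁻¹ *ᵥ (Ψᵀ *ᵥ b) := by
  have hDD : IsUnit (Dᵀ * D).det := (isUnit_iff_isUnit_det _).mp <|
    D.isUnit_transpose_mul_self_of_rank_eq (by rw [hD, Fintype.card_fin])
  have hsqrt : diagonal (fun i ↦ √(z i)) * diagonal (fun i ↦ (√(z i))⁻¹) = 1 := by
    rw [diagonal_mul_diagonal, ← diagonal_one]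
    exact congrArg diagonal (funext fun i ↦ mul_inv_cancel₀ (Real.sqrt_pos.mpr (hz i)).ne')
  have hXw₁ : Xᵀ *ᵥ w₁ = Ψᵀ *ᵥ b := by
    rw [hw₁, hX, hY, mulVec_mulVec, transpose_mul, transpose_mul, diagonal_transpose,
      Matrix.mul_assoc, Matrix.mul_assoc, ← Matrix.mul_assoc (diagonal _), hsqrt,
      Matrix.one_mul, D.transpose_mul_mul_nonsing_inv_transpose_mul_self hDD, Matrix.mul_one]
  have hXw₂ : Xᵀ *ᵥ w₂ = Ψᵀ *ᵥ b := by
    rw [hw₂, hX, mulVec_mulVec, transpose_mul, Matrix.mul_assoc,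
      Y.transpose_mul_mul_nonsing_inv_transpose_mul_self hAinv, Matrix.mul_one]
  have e₁ := IsLeastSquaresSolution.eq_nonsing_inv_mulVec hXinv hr₁
  have e₂ := IsLeastSquaresSolution.eq_nonsing_inv_mulVec hXinv hr₂
  rw [hXw₁] at e₁
  rw [hXw₂] at e₂
  exact ⟨e₁.trans e₂.symm, e₁⟩

/-- the minimizer of `‖X r − Z^{−1/2}(Dᵀ)† b‖²` equals the minimizer of
`‖X r − (Yᵀ)† b‖²`; both equal `(Xᵀ X)⁻¹ Ψᵀ b`.  Here `(Dᵀ)† = D (Dᵀ D)⁻¹` and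
`(Yᵀ)† = Y (Yᵀ Y)⁻¹`. -/
theorem stmt2 {m n ρ : ℕ} (z : Fin m → ℝ) (hz : ∀ i, 0 < z i)
    (D : Matrix (Fin m) (Fin n) ℝ) (hD : D.rank = n)
    (Y : Matrix (Fin m) (Fin n) ℝ)
    (hY : Y = Matrix.diagonal (fun i => Real.sqrt (z i)) * D)
    (Ψ : Matrix (Fin n) (Fin ρ) ℝ) (hΨ : Ψᵀ * Ψ = 1)
    (hAinv : IsUnit (Yᵀ * Y).det)
    (X : Matrix (Fin m) (Fin ρ) ℝ) (hX : X = Y * Ψ)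
    (hXinv : IsUnit (Xᵀ * X).det)
    (b : Fin n → ℝ)
    (w₁ w₂ : Fin m → ℝ)
    (hw₁ : w₁ = (Matrix.diagonal (fun i => (Real.sqrt (z i))⁻¹) * (D * (Dᵀ * D)⁻¹)) *ᵥ b)
    (hw₂ : w₂ = (Y * (Yᵀ * Y)⁻¹) *ᵥ b)
    (r₁ r₂ : Fin ρ → ℝ)
    (hr₁ : ∀ s : Fin ρ → ℝ, ∑ i, (X *ᵥ r₁ - w₁) i ^ 2 ≤ ∑ i, (X *ᵥ s - w₁) i ^ 2)
    (hr₂ : ∀ s : Fin ρ → ℝ, ∑ i, (X *ᵥ r₂ - w₂) i ^ 2 ≤ ∑ i, (X *ᵥ s - w₂) i ^ 2) :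
    r₁ = r₂ ∧ r₁ = (Xᵀ * X)⁻¹ *ᵥ (Ψᵀ *ᵥ b) :=
  stmt2_general z hz D hD Y hY Ψ hAinv X hX hXinv b w₁ w₂ hw₁ hw₂ r₁ r₂ hr₁ hr₂
end

section
/- For the unbiased row-sampling estimator Ĝ of G = X^T X with c i.i.d. samples from ξ, the expected squared Frobenius error satisfies E[‖G − Ĝ‖_F²] = (1/c)( Σ_{ℓ=1}^m ξ_ℓ^{−1} ‖X_{(ℓ)}‖⁴ − ‖G‖_F² ). -/
open Matrix Finset

/-!
A sample sequence `r : Fin c → ι` has probability `∏ t, ξ (r t)`, so sums weighted by it are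
expectations over `c` i.i.d. draws from `ξ`. Entrywise, `Ĝ i j` is the sample mean of the `c`
draws of `f ℓ = ξ ℓ⁻¹ X ℓ i X ℓ j`, whose mean is `G i j` (rows of probability zero vanish).
A sample mean of `c` i.i.d. copies has variance `Var f / c`, and summing
`Var f = Σ ξ ℓ⁻¹ (X ℓ i X ℓ j)² - G i j²` over all entries gives `Σ ξ ℓ⁻¹ ‖X ℓ‖⁴ - ‖G‖_F²`,
since `Σ_{i,j} (x i x j)² = ‖x‖⁴`.
-/

section IidSampling

variable {ι : Type*} [Fintype ι]

theorem sum_fun_fin_succ_eq_sum_cons {M : Type*} [AddCommMonoid M] {c : ℕ}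
    (G : (Fin (c + 1) → ι) → M) :
    ∑ r, G r = ∑ ℓ, ∑ r : Fin c → ι, G (Fin.cons ℓ r) := by
  rw [← (Fin.consEquiv fun _ => ι).sum_comp, Fintype.sum_prod_type]
  rfl

theorem sum_prod_eq_one {R : Type*} [CommSemiring R] {ξ : ι → R} (hξ : ∑ ℓ, ξ ℓ = 1) (c : ℕ) :
    ∑ r : Fin c → ι, ∏ t, ξ (r t) = 1 := by
  rw [← Fintype.prod_sum, hξ, prod_const_one]

variable {ξ : ι → ℝ}

theorem sum_prod_mul_sum_sq_of_mean_eq_zero (hξ : ∑ ℓ, ξ ℓ = 1) {h : ι → ℝ}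
    (hh : ∑ ℓ, ξ ℓ * h ℓ = 0) (c : ℕ) :
    ∑ r : Fin c → ι, (∏ t, ξ (r t)) * (∑ t, h (r t)) ^ 2 = c * ∑ ℓ, ξ ℓ * h ℓ ^ 2 := by
  induction c with
  | zero => simp
  | succ c ih =>
    rw [sum_fun_fin_succ_eq_sum_cons]
    simp only [Fin.prod_univ_succ, Fin.sum_univ_succ, Fin.cons_zero, Fin.cons_succ]
    have expand : ∀ ℓ, ∑ r : Fin c → ι, ξ ℓ * (∏ t, ξ (r t)) * (h ℓ + ∑ t, h (r t)) ^ 2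
        = ξ ℓ * h ℓ ^ 2 * (∑ r : Fin c → ι, ∏ t, ξ (r t))
          + ξ ℓ * h ℓ * (2 * ∑ r : Fin c → ι, (∏ t, ξ (r t)) * ∑ t, h (r t))
          + ξ ℓ * ∑ r : Fin c → ι, (∏ t, ξ (r t)) * (∑ t, h (r t)) ^ 2 := by
      intro ℓ
      rw [mul_sum, mul_sum, mul_sum, mul_sum, ← sum_add_distrib, ← sum_add_distrib]
      exact sum_congr rfl fun r _ => by ring
    rw [sum_congr rfl fun ℓ _ => expand ℓ, sum_add_distrib, sum_add_distrib, ← sum_mul,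
      ← sum_mul, ← sum_mul, hh, hξ, sum_prod_eq_one hξ, ih]
    push_cast
    ring

theorem sum_prod_mul_sq_mean_sub_sample_mean (hξ : ∑ ℓ, ξ ℓ = 1) (f : ι → ℝ) {c : ℕ}
    (hc : c ≠ 0) :
    ∑ r : Fin c → ι, (∏ t, ξ (r t)) * (∑ ℓ, ξ ℓ * f ℓ - (c : ℝ)⁻¹ * ∑ t, f (r t)) ^ 2
      = (c : ℝ)⁻¹ * (∑ ℓ, ξ ℓ * f ℓ ^ 2 - (∑ ℓ, ξ ℓ * f ℓ) ^ 2) := by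
  set μ := ∑ ℓ, ξ ℓ * f ℓ
  have hcR : (c : ℝ) ≠ 0 := Nat.cast_ne_zero.mpr hc
  have centered : ∑ ℓ, ξ ℓ * (f ℓ - μ) = 0 := by
    simp only [mul_sub, sum_sub_distrib, ← sum_mul, hξ, one_mul]
    exact sub_self μ
  have deviation : ∀ r : Fin c → ι,
      μ - (c : ℝ)⁻¹ * ∑ t, f (r t) = -(c : ℝ)⁻¹ * ∑ t, (f (r t) - μ) := by
    intro r
    rw [sum_sub_distrib, sum_const, card_univ, Fintype.card_fin, nsmul_eq_mul]
    field_simp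
    ring
  have variance : ∑ ℓ, ξ ℓ * (f ℓ - μ) ^ 2 = ∑ ℓ, ξ ℓ * f ℓ ^ 2 - μ ^ 2 := by
    have : ∀ ℓ, ξ ℓ * (f ℓ - μ) ^ 2 = ξ ℓ * f ℓ ^ 2 - 2 * μ * (ξ ℓ * f ℓ) + μ ^ 2 * ξ ℓ :=
      fun ℓ => by ring
    simp only [this, sum_add_distrib, sum_sub_distrib, ← mul_sum, hξ]
    ring
  simp only [deviation, mul_pow, mul_left_comm _ ((-(c : ℝ)⁻¹) ^ 2), ← mul_sum,
    sum_prod_mul_sum_sq_of_mean_eq_zero hξ centered, variance]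
  field_simp

end IidSampling

section RowSampling

variable {ι κ : Type*} [Fintype ι]

theorem sum_mul_inv_mul_eq_transpose_mul_self_apply {ξ : ι → ℝ} {X : Matrix ι κ ℝ}
    (hX : ∀ ℓ, ξ ℓ = 0 → X ℓ = 0) (i j : κ) :
    ∑ ℓ, ξ ℓ * ((ξ ℓ)⁻¹ * (X ℓ i * X ℓ j)) = (Xᵀ * X) i j := by
  simp only [mul_apply, transpose_apply]
  refine sum_congr rfl fun ℓ _ => ?_
  by_cases h : ξ ℓ = 0
  · simp [h, hX ℓ h]
  · exact mul_inv_cancel_left₀ h _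

theorem mul_inv_mul_sq {K : Type*} [Field K] (a b : K) : a * (a⁻¹ * b) ^ 2 = a⁻¹ * b ^ 2 := by
  by_cases h : a = 0
  · simp [h]
  · field_simp

theorem sum_sum_mul_sq_eq_sum_sq_sq {R : Type*} [CommSemiring R] [Fintype κ] (x : κ → R) :
    ∑ i, ∑ j, (x i * x j) ^ 2 = (∑ j, x j ^ 2) ^ 2 := by
  simp only [sq (∑ j, x j ^ 2), sum_mul_sum, mul_pow]

end RowSampling

theorem stmt5_general {m ρ c : ℕ} (hc : 0 < c)
    (X : Matrix (Fin m) (Fin ρ) ℝ)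
    (ξ : Fin m → ℝ) (hξ1 : ∑ ℓ, ξ ℓ = 1)
    (hξpos : ∀ ℓ, (∃ j, X ℓ j ≠ 0) → 0 < ξ ℓ) :
    ∑ r : Fin c → Fin m, (∏ t, ξ (r t)) *
        (∑ i, ∑ j, ((Xᵀ * X) i j -
          ((c : ℝ)⁻¹ • ∑ t, (ξ (r t))⁻¹ • Matrix.vecMulVec (X (r t)) (X (r t))) i j) ^ 2)
      = (c : ℝ)⁻¹ *
        ((∑ ℓ, (ξ ℓ)⁻¹ * (∑ j, X ℓ j ^ 2) ^ 2) - ∑ i, ∑ j, (Xᵀ * X) i j ^ 2) := by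
  have hX : ∀ ℓ, ξ ℓ = 0 → X ℓ = 0 := fun ℓ hℓ => by
    by_contra! hne
    exact (hξpos ℓ (Function.ne_iff.mp hne)).ne' hℓ
  have entry : ∀ i j, ∑ r : Fin c → Fin m, (∏ t, ξ (r t)) * ((Xᵀ * X) i j -
        ((c : ℝ)⁻¹ • ∑ t, (ξ (r t))⁻¹ • vecMulVec (X (r t)) (X (r t))) i j) ^ 2
      = (c : ℝ)⁻¹ * (∑ ℓ, (ξ ℓ)⁻¹ * (X ℓ i * X ℓ j) ^ 2 - (Xᵀ * X) i j ^ 2) := by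
    intro i j
    have variance := sum_prod_mul_sq_mean_sub_sample_mean hξ1
      (fun ℓ => (ξ ℓ)⁻¹ * (X ℓ i * X ℓ j)) hc.ne'
    simp only [sum_mul_inv_mul_eq_transpose_mul_self_apply hX, mul_inv_mul_sq] at variance
    rw [← variance]
    simp [Matrix.smul_apply, Matrix.sum_apply, vecMulVec_apply]
  calc _ = ∑ i, ∑ j, ∑ r : Fin c → Fin m, (∏ t, ξ (r t)) * ((Xᵀ * X) i j -
        ((c : ℝ)⁻¹ • ∑ t, (ξ (r t))⁻¹ • vecMulVec (X (r t)) (X (r t))) i j) ^ 2 := by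
        simp only [mul_sum]
        exact sum_comm.trans (sum_congr rfl fun _ _ => sum_comm)
    _ = _ := by
      simp only [entry, ← mul_sum, sum_sub_distrib, ← sum_sum_mul_sq_eq_sum_sq_sq]
      congr 2
      simp only [mul_sum]
      exact (sum_comm.trans (sum_congr rfl fun _ _ => sum_comm)).symm

/-- the expected squared Frobenius error of the row-sampling estimator:
`E[‖G − Ĝ‖_F²] = (1/c)( Σ_ℓ ξ_ℓ⁻¹ ‖X_{(ℓ)}‖⁴ − ‖G‖_F² )` with `G = Xᵀ X`. -/
theorem stmt5 {m ρ c : ℕ} (hc : 0 < c)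
    (X : Matrix (Fin m) (Fin ρ) ℝ)
    (ξ : Fin m → ℝ) (hξ0 : ∀ ℓ, 0 ≤ ξ ℓ) (hξ1 : ∑ ℓ, ξ ℓ = 1)
    (hξpos : ∀ ℓ, (∃ j, X ℓ j ≠ 0) → 0 < ξ ℓ) :
    ∑ r : Fin c → Fin m, (∏ t, ξ (r t)) *
        (∑ i, ∑ j, ((Xᵀ * X) i j -
          ((c : ℝ)⁻¹ • ∑ t, (ξ (r t))⁻¹ • Matrix.vecMulVec (X (r t)) (X (r t))) i j) ^ 2)
      = (c : ℝ)⁻¹ *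
        ((∑ ℓ, (ξ ℓ)⁻¹ * (∑ j, X ℓ j ^ 2) ^ 2) - ∑ i, ∑ j, (Xᵀ * X) i j ^ 2) :=
  stmt5_general hc X ξ hξ1 hξpos
end

section
/- With the optimal sampling distribution ξ_ℓ = ‖X_{(ℓ)}‖²/‖X‖_F², the row-sampling estimator Ĝ of G = X^T X from c samples satisfies E[‖G − Ĝ‖_F²] ≤ (1/c)( (Σ_{ℓ=1}^m ‖X_{(ℓ)}‖²)² − ‖G‖_F² ). -/
/-!
Write `G - Ĝ = c⁻¹ ∑ₜ f(rₜ)` entrywise, where `f ℓ = G - ξ_ℓ⁻¹ X_(ℓ)ᵀ X_(ℓ)` has mean zero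
under `ξ`. For i.i.d. samples the mean-zero terms are uncorrelated, so the expected squared
error is `c⁻¹ 𝔼‖f‖_F² = c⁻¹ (∑ₗ ξ_ℓ⁻¹ ‖X_(ℓ)‖⁴ - ‖G‖_F²)`, an identity valid for every
sampling distribution supported on the nonzero rows. For `ξ_ℓ = ‖X_(ℓ)‖² / ‖X‖_F²` the first
term is `‖X‖_F² ∑ₗ ‖X_(ℓ)‖² = ‖X‖_F⁴`.
-/

open Matrix Finset

section IidSums

/- For a probability vector `ξ`, `∑ r : Fin n → ι, (∏ t, ξ (r t)) * φ r` is the expectation of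
`φ` over `n` independent draws from `ξ`. -/

variable {ι : Type*} [Fintype ι] (ξ : ι → ℝ)

theorem sum_pi_fin_succ_prod_mul {n : ℕ} (φ : (Fin (n + 1) → ι) → ℝ) :
    ∑ r : Fin (n + 1) → ι, (∏ t, ξ (r t)) * φ r
      = ∑ a, ξ a * ∑ r : Fin n → ι, (∏ t, ξ (r t)) * φ (Fin.cons a r) := by
  rw [← Fintype.sum_equiv (Fin.consEquiv fun _ => ι) _ _ fun _ => rfl,
    Fintype.sum_prod_type]
  simp only [Fin.consEquiv, Equiv.coe_fn_mk, Fin.prod_univ_succ, Fin.cons_zero,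
    Fin.cons_succ, mul_sum, mul_assoc]

variable {ξ} (h1 : ∑ ℓ, ξ ℓ = 1)
include h1

theorem sum_pi_prod_eq_one (n : ℕ) : ∑ r : Fin n → ι, ∏ t, ξ (r t) = 1 := by
  rw [← Fintype.sum_pow, h1, one_pow]

variable {f : ι → ℝ} (h0 : ∑ ℓ, ξ ℓ * f ℓ = 0)
include h0

theorem sum_pi_prod_mul_sum_eq_zero (n : ℕ) :
    ∑ r : Fin n → ι, (∏ t, ξ (r t)) * ∑ t, f (r t) = 0 := by
  induction n with
  | zero => simp
  | succ n ih =>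
    rw [sum_pi_fin_succ_prod_mul]
    simp only [Fin.sum_univ_succ, Fin.cons_zero, Fin.cons_succ, mul_add, sum_add_distrib,
      ← sum_mul, sum_pi_prod_eq_one h1, ih]
    simpa using h0

theorem sum_pi_prod_mul_sum_sq (n : ℕ) :
    ∑ r : Fin n → ι, (∏ t, ξ (r t)) * (∑ t, f (r t)) ^ 2 = n * ∑ ℓ, ξ ℓ * f ℓ ^ 2 := by
  induction n with
  | zero => simp
  | succ n ih =>
    rw [sum_pi_fin_succ_prod_mul]
    have hcons (a : ι) :
        ∑ r : Fin n → ι, (∏ t, ξ (r t)) * (∑ t, f ((Fin.cons a r : Fin (n + 1) → ι) t)) ^ 2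
          = f a ^ 2 + n * ∑ ℓ, ξ ℓ * f ℓ ^ 2 := by
      simp only [Fin.sum_univ_succ, Fin.cons_zero, Fin.cons_succ]
      calc ∑ r : Fin n → ι, (∏ t, ξ (r t)) * (f a + ∑ t, f (r t)) ^ 2
          = (∑ r : Fin n → ι, ∏ t, ξ (r t)) * f a ^ 2
            + 2 * f a * ∑ r : Fin n → ι, (∏ t, ξ (r t)) * ∑ t, f (r t)
            + ∑ r : Fin n → ι, (∏ t, ξ (r t)) * (∑ t, f (r t)) ^ 2 := by
            rw [sum_mul, mul_sum, ← sum_add_distrib, ← sum_add_distrib]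
            exact sum_congr rfl fun r _ => by ring
        _ = f a ^ 2 + n * ∑ ℓ, ξ ℓ * f ℓ ^ 2 := by
          rw [sum_pi_prod_eq_one h1, sum_pi_prod_mul_sum_eq_zero h1 h0, ih]
          ring
    simp only [hcons, mul_add, sum_add_distrib, ← sum_mul, h1]
    push_cast
    ring

end IidSums

section ImportanceSampling

variable {ι : Type*} [Fintype ι] {p a : ι → ℝ} (hsupp : ∀ ℓ, p ℓ = 0 → a ℓ = 0)
include hsupp

theorem sum_mul_inv_mul_of_support : ∑ ℓ, p ℓ * ((p ℓ)⁻¹ * a ℓ) = ∑ ℓ, a ℓ := by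
  refine sum_congr rfl fun ℓ _ => ?_
  by_cases hp : p ℓ = 0
  · simp [hp, hsupp ℓ hp]
  · exact mul_inv_cancel_left₀ hp _

/-- Variance of the importance-sampling estimator `p_ℓ⁻¹ a_ℓ` of `∑ a`. -/
theorem sum_mul_sub_inv_mul_sq (h1 : ∑ ℓ, p ℓ = 1) :
    ∑ ℓ, p ℓ * (∑ k, a k - (p ℓ)⁻¹ * a ℓ) ^ 2 = ∑ ℓ, (p ℓ)⁻¹ * a ℓ ^ 2 - (∑ k, a k) ^ 2 := by
  have hsq (ℓ : ι) : p ℓ * ((p ℓ)⁻¹ * a ℓ) ^ 2 = (p ℓ)⁻¹ * a ℓ ^ 2 := by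
    by_cases hp : p ℓ = 0
    · simp [hp]
    · field_simp
  calc ∑ ℓ, p ℓ * (∑ k, a k - (p ℓ)⁻¹ * a ℓ) ^ 2
      = (∑ ℓ, p ℓ) * (∑ k, a k) ^ 2 - 2 * (∑ k, a k) * ∑ ℓ, p ℓ * ((p ℓ)⁻¹ * a ℓ)
        + ∑ ℓ, p ℓ * ((p ℓ)⁻¹ * a ℓ) ^ 2 := by
        rw [sum_mul, mul_sum, ← sum_sub_distrib, ← sum_add_distrib]
        exact sum_congr rfl fun ℓ _ => by ring
    _ = ∑ ℓ, (p ℓ)⁻¹ * a ℓ ^ 2 - (∑ k, a k) ^ 2 := by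
        rw [h1, sum_mul_inv_mul_of_support hsupp, sum_congr rfl fun ℓ _ => hsq ℓ]
        ring

end ImportanceSampling

theorem sum_sum_mul_sq {κ : Type*} [Fintype κ] (v : κ → ℝ) :
    ∑ i, ∑ j, (v i * v j) ^ 2 = (∑ j, v j ^ 2) ^ 2 := by
  simp only [sq (∑ j, v j ^ 2), sum_mul_sum, mul_pow]

section RowSampling

variable {ι κ : Type*} [Fintype ι] (X : Matrix ι κ ℝ) (ξ : ι → ℝ)

/-- The estimator `Ĝ = c⁻¹ ∑ₜ ξ_{rₜ}⁻¹ X_(rₜ)ᵀ X_(rₜ)` of `Xᵀ X` from the sampled rows `r`. -/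
noncomputable def rowSampleGram {c : ℕ} (r : Fin c → ι) : Matrix κ κ ℝ :=
  (c : ℝ)⁻¹ • ∑ t, (ξ (r t))⁻¹ • vecMulVec (X (r t)) (X (r t))

theorem transpose_mul_self_apply (i j : κ) : (Xᵀ * X) i j = ∑ ℓ, X ℓ i * X ℓ j := by
  simp only [mul_apply, transpose_apply]

theorem transpose_mul_self_sub_rowSampleGram_apply {c : ℕ} (hc : c ≠ 0) (r : Fin c → ι)
    (i j : κ) :
    (Xᵀ * X) i j - rowSampleGram X ξ r i j
      = (c : ℝ)⁻¹ * ∑ t, ((Xᵀ * X) i j - (ξ (r t))⁻¹ * (X (r t) i * X (r t) j)) := by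
  simp only [rowSampleGram, Matrix.smul_apply, Matrix.sum_apply, vecMulVec_apply, smul_eq_mul,
    sum_sub_distrib, sum_const, card_univ, Fintype.card_fin, nsmul_eq_mul, mul_sub]
  rw [inv_mul_cancel_left₀ (Nat.cast_ne_zero.mpr hc)]

theorem sum_pi_prod_mul_sq_sub_rowSampleGram_apply {c : ℕ} (hc : c ≠ 0) (h1 : ∑ ℓ, ξ ℓ = 1)
    (hsupp : ∀ ℓ, ξ ℓ = 0 → X ℓ = 0) (i j : κ) :
    ∑ r : Fin c → ι, (∏ t, ξ (r t)) * ((Xᵀ * X) i j - rowSampleGram X ξ r i j) ^ 2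
      = (c : ℝ)⁻¹ * (∑ ℓ, (ξ ℓ)⁻¹ * (X ℓ i * X ℓ j) ^ 2 - (Xᵀ * X) i j ^ 2) := by
  set f : ι → ℝ := fun ℓ => (Xᵀ * X) i j - (ξ ℓ)⁻¹ * (X ℓ i * X ℓ j)
  have hsupp' (ℓ : ι) (hℓ : ξ ℓ = 0) : X ℓ i * X ℓ j = 0 := by simp [hsupp ℓ hℓ]
  have hmean : ∑ ℓ, ξ ℓ * f ℓ = 0 := by
    simp only [f, mul_sub, sum_sub_distrib, ← sum_mul, h1, one_mul,
      sum_mul_inv_mul_of_support hsupp', transpose_mul_self_apply, sub_self]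
  have hvar : ∑ ℓ, ξ ℓ * f ℓ ^ 2 = ∑ ℓ, (ξ ℓ)⁻¹ * (X ℓ i * X ℓ j) ^ 2 - (Xᵀ * X) i j ^ 2 := by
    simpa only [f, transpose_mul_self_apply] using sum_mul_sub_inv_mul_sq hsupp' h1
  calc ∑ r : Fin c → ι, (∏ t, ξ (r t)) * ((Xᵀ * X) i j - rowSampleGram X ξ r i j) ^ 2
      = (c : ℝ)⁻¹ ^ 2 * ∑ r : Fin c → ι, (∏ t, ξ (r t)) * (∑ t, f (r t)) ^ 2 := by
        rw [mul_sum]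
        refine sum_congr rfl fun r _ => ?_
        rw [transpose_mul_self_sub_rowSampleGram_apply X ξ hc]
        ring
    _ = (c : ℝ)⁻¹ * (∑ ℓ, (ξ ℓ)⁻¹ * (X ℓ i * X ℓ j) ^ 2 - (Xᵀ * X) i j ^ 2) := by
        rw [sum_pi_prod_mul_sum_sq h1 hmean, hvar]
        field_simp

theorem sum_pi_prod_mul_frobenius_sq_error [Fintype κ] {c : ℕ} (hc : c ≠ 0) (h1 : ∑ ℓ, ξ ℓ = 1)
    (hsupp : ∀ ℓ, ξ ℓ = 0 → X ℓ = 0) :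
    ∑ r : Fin c → ι, (∏ t, ξ (r t)) *
        ∑ i, ∑ j, ((Xᵀ * X) i j - rowSampleGram X ξ r i j) ^ 2
      = (c : ℝ)⁻¹ * (∑ ℓ, (ξ ℓ)⁻¹ * (∑ j, X ℓ j ^ 2) ^ 2 - ∑ i, ∑ j, (Xᵀ * X) i j ^ 2) := by
  have hquartic : ∑ i, ∑ j, ∑ ℓ, (ξ ℓ)⁻¹ * (X ℓ i * X ℓ j) ^ 2
      = ∑ ℓ, (ξ ℓ)⁻¹ * (∑ j, X ℓ j ^ 2) ^ 2 := by
    rw [(sum_congr rfl fun _ _ => sum_comm).trans sum_comm]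
    simp only [← mul_sum, sum_sum_mul_sq]
  calc ∑ r : Fin c → ι, (∏ t, ξ (r t)) * ∑ i, ∑ j, ((Xᵀ * X) i j - rowSampleGram X ξ r i j) ^ 2
      = ∑ i, ∑ j, ∑ r : Fin c → ι,
          (∏ t, ξ (r t)) * ((Xᵀ * X) i j - rowSampleGram X ξ r i j) ^ 2 := by
        simp only [mul_sum]
        rw [sum_comm]
        exact sum_congr rfl fun i _ => sum_comm
    _ = (c : ℝ)⁻¹ * (∑ ℓ, (ξ ℓ)⁻¹ * (∑ j, X ℓ j ^ 2) ^ 2 - ∑ i, ∑ j, (Xᵀ * X) i j ^ 2) := by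
        simp only [sum_pi_prod_mul_sq_sub_rowSampleGram_apply X ξ hc h1 hsupp, ← mul_sum,
          sum_sub_distrib, hquartic]

end RowSampling

theorem sum_inv_div_sum_mul_sq {ι : Type*} [Fintype ι] (s : ι → ℝ) :
    ∑ ℓ, (s ℓ / ∑ k, s k)⁻¹ * s ℓ ^ 2 = (∑ k, s k) ^ 2 := by
  have hterm (ℓ : ι) : (s ℓ / ∑ k, s k)⁻¹ * s ℓ ^ 2 = (∑ k, s k) * s ℓ := by
    by_cases hs : s ℓ = 0
    · simp [hs]
    · rw [inv_div]
      field_simp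
  rw [sum_congr rfl fun ℓ _ => hterm ℓ, ← mul_sum, sq]

theorem eq_zero_of_sum_sq_eq_zero {κ : Type*} [Fintype κ] {v : κ → ℝ} (h : ∑ j, v j ^ 2 = 0) :
    v = 0 := by
  simp only [sq, sum_mul_self_eq_zero_iff, mem_univ, true_implies] at h
  exact funext h

/-- with the optimal sampling distribution `ξ_ℓ = ‖X_{(ℓ)}‖²/‖X‖_F²`,
the row-sampling estimator from `c` samples satisfies
`E[‖G − Ĝ‖_F²] ≤ (1/c)( (Σ_ℓ ‖X_{(ℓ)}‖²)² − ‖G‖_F² )`. -/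
theorem stmt7 {m ρ c : ℕ} (hc : 0 < c)
    (X : Matrix (Fin m) (Fin ρ) ℝ) (hX : X ≠ 0)
    (ξ : Fin m → ℝ)
    (hξ : ∀ ℓ, ξ ℓ = (∑ j, X ℓ j ^ 2) / (∑ ℓ', ∑ j, X ℓ' j ^ 2)) :
    ∑ r : Fin c → Fin m, (∏ t, ξ (r t)) *
        (∑ i, ∑ j, ((Xᵀ * X) i j -
          ((c : ℝ)⁻¹ • ∑ t, (ξ (r t))⁻¹ • Matrix.vecMulVec (X (r t)) (X (r t))) i j) ^ 2)
      ≤ (c : ℝ)⁻¹ *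
        ((∑ ℓ, ∑ j, X ℓ j ^ 2) ^ 2 - ∑ i, ∑ j, (Xᵀ * X) i j ^ 2) := by
  have hF : ∑ ℓ, ∑ j, X ℓ j ^ 2 ≠ 0 := fun h => hX <| funext fun ℓ =>
    eq_zero_of_sum_sq_eq_zero <|
      (sum_eq_zero_iff_of_nonneg fun ℓ _ => by positivity).1 h ℓ (mem_univ ℓ)
  have h1 : ∑ ℓ, ξ ℓ = 1 := by simp only [hξ, ← sum_div, div_self hF]
  have hsupp (ℓ : Fin m) (hℓ : ξ ℓ = 0) : X ℓ = 0 :=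
    eq_zero_of_sum_sq_eq_zero <| by simpa [hξ, hF] using hℓ
  refine (sum_pi_prod_mul_frobenius_sq_error X ξ hc.ne' h1 hsupp).trans_le (le_of_eq ?_)
  simp only [hξ, sum_inv_div_sum_mul_sq]
end

section
/- Let A ∈ ℝ^{n×n} be symmetric positive definite, Ψ ∈ ℝ^{n×ρ} with Ψ^T Ψ = I_ρ, Π = Ψ Ψ^T, G = Ψ^T A Ψ, u ∈ ℝ^n, and r = Ψ^T u + G^{−1} Ψ^T A (I − Π) u. Then ‖Π u − Ψ r‖ ≤ (λ_max(A)/λ_min(G)) ‖u − Π u‖. -/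
/-! The first term of `r` reproduces `Π u` exactly, so the error is `Π u - Ψ r = -Ψ z` with
`G z = Ψᵀ A (u - Π u)`. Since `Ψ` is an isometry and `Ψᵀ` a contraction,
`λ_min(G) ‖z‖ ≤ ‖G z‖ ≤ ‖A (u - Π u)‖ ≤ λ_max(A) ‖u - Π u‖`. -/

open Matrix Finset

section

variable {ι κ : Type*} [Fintype ι] [Fintype κ]

lemma sum_sq_eq_dotProduct_self (v : ι → ℝ) : ∑ i, v i ^ 2 = v ⬝ᵥ v := by
  simp only [dotProduct, sq]

lemma dotProduct_self_nonneg (v : ι → ℝ) : 0 ≤ v ⬝ᵥ v := by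
  simpa using dotProduct_self_star_nonneg v

lemma dotProduct_sq_le_dotProduct_self_mul (v w : ι → ℝ) :
    (v ⬝ᵥ w) ^ 2 ≤ (v ⬝ᵥ v) * (w ⬝ᵥ w) := by
  rw [← sum_sq_eq_dotProduct_self, ← sum_sq_eq_dotProduct_self]
  exact sum_mul_sq_le_sq_mul_sq univ v w

lemma dotProduct_mulVec_self_of_transpose_mul_self [DecidableEq κ] {B : Matrix ι κ ℝ}
    (hB : Bᵀ * B = 1) (x : κ → ℝ) : (B *ᵥ x) ⬝ᵥ (B *ᵥ x) = x ⬝ᵥ x := by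
  rw [dotProduct_mulVec, ← mulVec_transpose, mulVec_mulVec, hB, one_mulVec]

lemma dotProduct_transpose_mulVec_self_le [DecidableEq κ] {B : Matrix ι κ ℝ}
    (hB : Bᵀ * B = 1) (x : ι → ℝ) : (Bᵀ *ᵥ x) ⬝ᵥ (Bᵀ *ᵥ x) ≤ x ⬝ᵥ x := by
  set p := Bᵀ *ᵥ x
  -- `‖p‖² = ⟪B p, x⟫ ≤ ‖B p‖ ‖x‖ = ‖p‖ ‖x‖`
  have hp : p ⬝ᵥ p = (B *ᵥ p) ⬝ᵥ x := by
    conv_lhs => rw [dotProduct_mulVec, vecMul_transpose]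
  have hcs := dotProduct_sq_le_dotProduct_self_mul (B *ᵥ p) x
  rw [dotProduct_mulVec_self_of_transpose_mul_self hB, ← hp] at hcs
  nlinarith [dotProduct_self_nonneg p, dotProduct_self_nonneg x]

lemma Matrix.IsHermitian.exists_dotProduct_mulVec_self_eq [DecidableEq ι] {M : Matrix ι ι ℝ}
    (hM : M.IsHermitian) (v : ι → ℝ) :
    ∃ y : ι → ℝ, v ⬝ᵥ v = y ⬝ᵥ y ∧
      (M *ᵥ v) ⬝ᵥ (M *ᵥ v) = ∑ i, hM.eigenvalues i ^ 2 * y i ^ 2 := by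
  set U : Matrix ι ι ℝ := ↑hM.eigenvectorUnitary
  have hUU : Uᵀ * U = 1 := by
    simpa [U, star_eq_conjTranspose] using Unitary.coe_star_mul_self hM.eigenvectorUnitary
  have hUU' : Uᵀᵀ * Uᵀ = 1 := by
    simpa [U, star_eq_conjTranspose] using Unitary.coe_mul_star_self hM.eigenvectorUnitary
  have hMv : M *ᵥ v = U *ᵥ (diagonal hM.eigenvalues *ᵥ (Uᵀ *ᵥ v)) := by
    conv_lhs => rw [hM.spectral_theorem]
    simp [U, mulVec_mulVec, Matrix.mul_assoc, star_eq_conjTranspose]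
  refine ⟨Uᵀ *ᵥ v, (dotProduct_mulVec_self_of_transpose_mul_self hUU' v).symm, ?_⟩
  rw [hMv, dotProduct_mulVec_self_of_transpose_mul_self hUU, ← sum_sq_eq_dotProduct_self]
  simp only [mulVec_diagonal, mul_pow]

lemma Matrix.IsHermitian.dotProduct_mulVec_self_le [DecidableEq ι] {M : Matrix ι ι ℝ}
    (hM : M.IsHermitian) {c : ℝ} (hc : ∀ i, |hM.eigenvalues i| ≤ c) (v : ι → ℝ) :
    (M *ᵥ v) ⬝ᵥ (M *ᵥ v) ≤ c ^ 2 * (v ⬝ᵥ v) := by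
  obtain ⟨y, hv, hMv⟩ := hM.exists_dotProduct_mulVec_self_eq v
  rw [hMv, hv, ← sum_sq_eq_dotProduct_self, mul_sum]
  exact sum_le_sum fun i _ ↦ mul_le_mul_of_nonneg_right
    (sq_le_sq.mpr ((hc i).trans (le_abs_self c))) (sq_nonneg _)

lemma Matrix.IsHermitian.le_dotProduct_mulVec_self [DecidableEq ι] {M : Matrix ι ι ℝ}
    (hM : M.IsHermitian) {c : ℝ} (hc₀ : 0 ≤ c) (hc : ∀ i, c ≤ |hM.eigenvalues i|) (v : ι → ℝ) :
    c ^ 2 * (v ⬝ᵥ v) ≤ (M *ᵥ v) ⬝ᵥ (M *ᵥ v) := by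
  obtain ⟨y, hv, hMv⟩ := hM.exists_dotProduct_mulVec_self_eq v
  rw [hMv, hv, ← sum_sq_eq_dotProduct_self, mul_sum]
  exact sum_le_sum fun i _ ↦ mul_le_mul_of_nonneg_right
    (sq_le_sq.mpr ((abs_of_nonneg hc₀).trans_le (hc i))) (sq_nonneg _)

lemma Matrix.PosDef.dotProduct_mulVec_self_le [DecidableEq ι] [Nonempty ι] {M : Matrix ι ι ℝ}
    (hM : M.PosDef) (v : ι → ℝ) :
    (M *ᵥ v) ⬝ᵥ (M *ᵥ v) ≤ univ.sup' univ_nonempty hM.isHermitian.eigenvalues ^ 2 * (v ⬝ᵥ v) :=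
  hM.isHermitian.dotProduct_mulVec_self_le
    (fun i ↦ (abs_of_pos (hM.eigenvalues_pos i)).symm ▸ le_sup' _ (mem_univ i)) v

lemma Matrix.PosDef.le_dotProduct_mulVec_self [DecidableEq ι] [Nonempty ι] {M : Matrix ι ι ℝ}
    (hM : M.PosDef) (v : ι → ℝ) :
    univ.inf' univ_nonempty hM.isHermitian.eigenvalues ^ 2 * (v ⬝ᵥ v) ≤ (M *ᵥ v) ⬝ᵥ (M *ᵥ v) :=
  hM.isHermitian.le_dotProduct_mulVec_self
    ((le_inf'_iff _ _).mpr fun i _ ↦ (hM.eigenvalues_pos i).le)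
    (fun i ↦ (abs_of_pos (hM.eigenvalues_pos i)).symm ▸ inf'_le _ (mem_univ i)) v

end

theorem stmt11_general {n ρ : ℕ} [NeZero n] [NeZero ρ]
    (A : Matrix (Fin n) (Fin n) ℝ) (hA : A.PosDef)
    (Ψ : Matrix (Fin n) (Fin ρ) ℝ) (hΨ : Ψᵀ * Ψ = 1)
    (G : Matrix (Fin ρ) (Fin ρ) ℝ) (hGpd : G.PosDef)
    (u : Fin n → ℝ) (r : Fin ρ → ℝ)
    (hr : r = Ψᵀ *ᵥ u + (G⁻¹ * (Ψᵀ * A * (1 - Ψ * Ψᵀ))) *ᵥ u) :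
    Real.sqrt (∑ i, ((Ψ * Ψᵀ) *ᵥ u - Ψ *ᵥ r) i ^ 2) ≤
      (Finset.univ.sup' Finset.univ_nonempty hA.isHermitian.eigenvalues /
        Finset.univ.inf' Finset.univ_nonempty hGpd.isHermitian.eigenvalues) *
      Real.sqrt (∑ i, (u - (Ψ * Ψᵀ) *ᵥ u) i ^ 2) := by
  set lmax := univ.sup' univ_nonempty hA.isHermitian.eigenvalues
  set lmin := univ.inf' univ_nonempty hGpd.isHermitian.eigenvalues
  have hlmax : 0 < lmax := (hA.eigenvalues_pos 0).trans_le (le_sup' _ (mem_univ 0))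
  have hlmin : 0 < lmin := (lt_inf'_iff _).mpr fun i _ ↦ hGpd.eigenvalues_pos i
  set w := u - (Ψ * Ψᵀ) *ᵥ u
  set y := Ψᵀ *ᵥ (A *ᵥ w)
  set z := G⁻¹ *ᵥ y
  have hcorr : (G⁻¹ * (Ψᵀ * A * (1 - Ψ * Ψᵀ))) *ᵥ u = z := by
    simp only [z, y, w, ← mulVec_mulVec, sub_mulVec, one_mulVec]
  have herr : (Ψ * Ψᵀ) *ᵥ u - Ψ *ᵥ r = -(Ψ *ᵥ z) := by
    rw [hr, mulVec_add, hcorr, mulVec_mulVec]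
    abel
  have hGz : G *ᵥ z = y := by
    rw [mulVec_mulVec, mul_nonsing_inv G hGpd.det_pos.ne'.isUnit, one_mulVec]
  have hz : lmin ^ 2 * (z ⬝ᵥ z) ≤ y ⬝ᵥ y := hGz ▸ hGpd.le_dotProduct_mulVec_self z
  have hy : y ⬝ᵥ y ≤ (A *ᵥ w) ⬝ᵥ (A *ᵥ w) := dotProduct_transpose_mulVec_self_le hΨ _
  have hAw : (A *ᵥ w) ⬝ᵥ (A *ᵥ w) ≤ lmax ^ 2 * (w ⬝ᵥ w) := hA.dotProduct_mulVec_self_le w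
  have hzw : z ⬝ᵥ z ≤ (lmax / lmin) ^ 2 * (w ⬝ᵥ w) := by
    rw [div_pow, div_mul_eq_mul_div, le_div_iff₀ (by positivity)]
    linarith
  rw [herr, sum_sq_eq_dotProduct_self, neg_dotProduct_neg,
    dotProduct_mulVec_self_of_transpose_mul_self hΨ, sum_sq_eq_dotProduct_self]
  refine Real.sqrt_le_iff.mpr ⟨mul_nonneg (div_pos hlmax hlmin).le (Real.sqrt_nonneg _), ?_⟩
  rwa [mul_pow, Real.sq_sqrt (dotProduct_self_nonneg w)]

/-- with `A` symmetric positive definite, `Ψ` with orthonormal columns,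
`Π = Ψ Ψᵀ`, `G = Ψᵀ A Ψ` and `r = Ψᵀ u + G⁻¹ Ψᵀ A (I − Π) u`, one has
`‖Π u − Ψ r‖ ≤ (λ_max(A)/λ_min(G)) ‖u − Π u‖`. -/
theorem stmt11 {n ρ : ℕ} [NeZero n] [NeZero ρ]
    (A : Matrix (Fin n) (Fin n) ℝ) (hA : A.PosDef)
    (Ψ : Matrix (Fin n) (Fin ρ) ℝ) (hΨ : Ψᵀ * Ψ = 1)
    (G : Matrix (Fin ρ) (Fin ρ) ℝ) (hG : G = Ψᵀ * A * Ψ) (hGpd : G.PosDef)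
    (u : Fin n → ℝ) (r : Fin ρ → ℝ)
    (hr : r = Ψᵀ *ᵥ u + (G⁻¹ * (Ψᵀ * A * (1 - Ψ * Ψᵀ))) *ᵥ u) :
    Real.sqrt (∑ i, ((Ψ * Ψᵀ) *ᵥ u - Ψ *ᵥ r) i ^ 2) ≤
      (Finset.univ.sup' Finset.univ_nonempty hA.isHermitian.eigenvalues /
        Finset.univ.inf' Finset.univ_nonempty hGpd.isHermitian.eigenvalues) *
      Real.sqrt (∑ i, (u - (Ψ * Ψᵀ) *ᵥ u) i ^ 2) :=
  stmt11_general A hA Ψ hΨ G hGpd u r hr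
end

section
/- Let D ∈ ℝ^{m×n} with m ≥ n = rank(D) have SVD D = U Σ V^T with singular values λ_1 ≥ … ≥ λ_n > 0, let z > 0, Y = √z D, and let Ψ consist of the last ρ right singular vectors of D, X = Y Ψ. Define ξ^{l(X)}_ℓ = (U_{*(n−ρ+1:n)} U_{*(n−ρ+1:n)}^T)_{ℓℓ}/ρ and ξ^{r(X)}_ℓ = ‖X_{(ℓ)}‖²/‖X‖_F². Then ‖ξ^{r(X)} − ξ^{l(X)}‖_∞ ≤ max( λ_{n−ρ+1}²/Σ_{i=n−ρ+1}^n λ_i² − 1/ρ , 1/ρ − λ_n²/Σ_{i=n−ρ+1}^n λ_i² ). -/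
open Matrix Finset

/-!
Write `u_j = U_{ℓ, n-ρ+j}` and `w_j = λ_{n-ρ+j}² / Σ_k λ_{n-ρ+k}²`. Since `V` is orthogonal,
`X = √z · U_{*(n−ρ+1:n)} diag(λ_{n−ρ+1}, …, λ_n)`, and orthonormality of the columns of `U` gives
`‖X‖_F² = z Σ_k λ_{n-ρ+k}²`; hence `ξʳ_ℓ − ξˡ_ℓ = Σ_j u_j² (w_j − 1/ρ)`. The weights `u_j²` are
nonnegative with total mass at most `1`, because `U Uᵀ` is an orthogonal projection, and each
`w_j − 1/ρ` lies between `w_ρ − 1/ρ ≤ 0` and `w_1 − 1/ρ ≥ 0` because the `w_j` average `1/ρ`.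
-/

section OrthonormalColumns

variable {m n : Type*} [Fintype m] [DecidableEq n] {U : Matrix m n ℝ}

theorem sum_sq_col_eq_one_of_transpose_mul_self (hU : Uᵀ * U = 1) (k : n) :
    ∑ i, U i k ^ 2 = 1 := by
  simpa [mul_apply, one_apply, sq] using congrFun (congrFun hU k) k

/-- `P = U Uᵀ` is a symmetric idempotent, so `P_ℓℓ = Σ_k P_ℓk² ≥ P_ℓℓ²`. -/
theorem sum_sq_row_le_one_of_transpose_mul_self [Fintype n] (hU : Uᵀ * U = 1) (ℓ : m) :
    ∑ k, U ℓ k ^ 2 ≤ 1 := by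
  set P := U * Uᵀ
  have hP_symm : ∀ a b, P a b = P b a := fun a b => by
    simp only [P, mul_apply, transpose_apply, mul_comm]
  have hP_idem : P * P = P := by
    simp only [P, Matrix.mul_assoc, ← Matrix.mul_assoc Uᵀ, hU, Matrix.one_mul]
  have hdiag : ∑ k, U ℓ k ^ 2 = P ℓ ℓ := by
    simp [P, mul_apply, sq]
  have hdiag_eq : P ℓ ℓ = ∑ k, P ℓ k ^ 2 := by
    conv_lhs => rw [← hP_idem, mul_apply]
    exact sum_congr rfl fun k _ => by rw [sq, hP_symm k ℓ]
  have hdiag_sq : P ℓ ℓ ^ 2 ≤ ∑ k, P ℓ k ^ 2 :=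
    single_le_sum (f := fun k => P ℓ k ^ 2) (fun k _ => sq_nonneg _) (mem_univ ℓ)
  nlinarith

theorem sum_sum_sq_mul_eq_of_transpose_mul_self {κ : Type*} [Fintype κ] (hU : Uᵀ * U = 1)
    (e : κ → n) (c : κ → ℝ) :
    ∑ i, ∑ j, (U i (e j) * c j) ^ 2 = ∑ j, c j ^ 2 := by
  rw [sum_comm]
  refine sum_congr rfl fun j _ => ?_
  simp only [mul_pow, ← sum_mul, sum_sq_col_eq_one_of_transpose_mul_self hU, one_mul]

end OrthonormalColumns

theorem sum_comp_le_sum_of_injective {ι κ : Type*} [Fintype ι] [Fintype κ] {e : κ → ι}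
    (he : Function.Injective e) {f : ι → ℝ} (hf : ∀ i, 0 ≤ f i) :
    ∑ j, f (e j) ≤ ∑ i, f i := by
  calc ∑ j, f (e j) = ∑ i ∈ univ.map ⟨e, he⟩, f i := (sum_map univ ⟨e, he⟩ f).symm
    _ ≤ ∑ i, f i := sum_le_sum_of_subset_of_nonneg (subset_univ _) fun i _ _ => hf i

theorem mul_submatrix_apply_of_svd {m n κ : Type*} [Fintype n] [DecidableEq n]
    {U : Matrix m n ℝ} {V : Matrix n n ℝ} {lam : n → ℝ} {D : Matrix m n ℝ}
    (hV : Vᵀ * V = 1) (hD : D = U * diagonal lam * Vᵀ)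
    {e : κ → n} {Ψ : Matrix n κ ℝ} (hΨ : ∀ i j, Ψ i j = V i (e j)) (i : m) (j : κ) :
    (D * Ψ) i j = U i (e j) * lam (e j) := by
  have hDV : D * V = U * diagonal lam := by
    rw [hD, Matrix.mul_assoc, hV, Matrix.mul_one]
  have hDΨ : (D * Ψ) i j = (D * V) i (e j) := by
    simp only [mul_apply, hΨ]
  rw [hDΨ, hDV, mul_diagonal]

section WeightedSums

variable {ι : Type*} [Fintype ι] {a c w : ι → ℝ}

theorem abs_sum_mul_le_max (ha : ∀ j, 0 ≤ a j) (ha_sum : ∑ j, a j ≤ 1) {B₁ B₂ : ℝ}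
    (hB₁ : 0 ≤ B₁) (hB₂ : 0 ≤ B₂) (hc : ∀ j, -B₂ ≤ c j ∧ c j ≤ B₁) :
    |∑ j, a j * c j| ≤ max B₁ B₂ := by
  have hupper : ∑ j, a j * c j ≤ B₁ :=
    calc ∑ j, a j * c j ≤ ∑ j, a j * B₁ :=
          sum_le_sum fun j _ => mul_le_mul_of_nonneg_left (hc j).2 (ha j)
      _ = (∑ j, a j) * B₁ := by rw [sum_mul]
      _ ≤ B₁ := mul_le_of_le_one_left hB₁ ha_sum
  have hlower : -B₂ ≤ ∑ j, a j * c j :=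
    calc -B₂ ≤ (∑ j, a j) * -B₂ := by nlinarith
      _ = ∑ j, a j * -B₂ := by rw [sum_mul]
      _ ≤ ∑ j, a j * c j :=
          sum_le_sum fun j _ => mul_le_mul_of_nonneg_left (hc j).1 (ha j)
  rw [abs_le]
  constructor <;> linarith [le_max_left B₁ B₂, le_max_right B₁ B₂]

theorem abs_sum_mul_sub_sum_div_card_le [Nonempty ι] (ha : ∀ j, 0 ≤ a j)
    (ha_sum : ∑ j, a j ≤ 1) (hw : ∑ j, w j = 1) {lo hi : ℝ} (hlo : ∀ j, lo ≤ w j)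
    (hhi : ∀ j, w j ≤ hi) :
    |∑ j, a j * w j - (∑ j, a j) / Fintype.card ι| ≤
      max (hi - 1 / Fintype.card ι) (1 / Fintype.card ι - lo) := by
  set k : ℝ := (Fintype.card ι : ℝ)
  have hk : 0 < k := by simp only [k]; exact_mod_cast Fintype.card_pos
  have hmean : ∑ _j : ι, 1 / k = ∑ j, w j := by
    rw [sum_const, card_univ, nsmul_eq_mul, mul_one_div_cancel hk.ne', hw]
  obtain ⟨j₁, -, hj₁⟩ := exists_le_of_sum_le univ_nonempty hmean.le
  obtain ⟨j₂, -, hj₂⟩ := exists_le_of_sum_le univ_nonempty hmean.ge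
  have hrewrite : ∑ j, a j * w j - (∑ j, a j) / k = ∑ j, a j * (w j - 1 / k) := by
    rw [sum_div, ← sum_sub_distrib]
    exact sum_congr rfl fun j _ => by ring
  rw [hrewrite]
  refine abs_sum_mul_le_max ha ha_sum ?_ ?_ fun j => ⟨?_, ?_⟩
  · linarith [hhi j₁]
  · linarith [hlo j₂]
  · linarith [hlo j]
  · linarith [hhi j]

end WeightedSums

/-- homogeneous model, max-norm bound: with `D = U Σ Vᵀ` an SVD of the
full-column-rank matrix `D`, `Ψ` the last `ρ` right singular vectors, `Y = √z D`,
`X = Y Ψ`, leverage-score probabilities `ξˡ` and row-norm probabilities `ξʳ`: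
`‖ξʳ − ξˡ‖_∞ ≤ max( λ_{n−ρ+1}²/Σ − 1/ρ , 1/ρ − λ_n²/Σ )` where
`Σ = Σ_{i=n−ρ+1}^n λ_i²`. -/
theorem stmt16 {m n ρ : ℕ} (hρ : 0 < ρ) (hρn : ρ ≤ n)
    (U : Matrix (Fin m) (Fin n) ℝ) (hU : Uᵀ * U = 1)
    (V : Matrix (Fin n) (Fin n) ℝ) (hV : Vᵀ * V = 1)
    (lam : Fin n → ℝ) (hlama : Antitone lam) (hlampos : ∀ i, 0 < lam i)
    (D : Matrix (Fin m) (Fin n) ℝ) (hD : D = U * Matrix.diagonal lam * Vᵀ)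
    (z : ℝ) (hz : 0 < z)
    (emb : Fin ρ → Fin n) (hemb : ∀ j, (emb j : ℕ) = n - ρ + (j : ℕ))
    (Ψ : Matrix (Fin n) (Fin ρ) ℝ) (hΨ : ∀ i j, Ψ i j = V i (emb j))
    (X : Matrix (Fin m) (Fin ρ) ℝ) (hX : X = Real.sqrt z • (D * Ψ))
    (ξl ξr : Fin m → ℝ)
    (hξl : ∀ ℓ, ξl ℓ = (∑ j, (U ℓ (emb j)) ^ 2) / ρ)
    (hξr : ∀ ℓ, ξr ℓ = (∑ j, X ℓ j ^ 2) / (∑ ℓ', ∑ j, X ℓ' j ^ 2)) :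
    ∀ ℓ, |ξr ℓ - ξl ℓ| ≤
      max ((lam ⟨n - ρ, by omega⟩) ^ 2 / (∑ j, (lam (emb j)) ^ 2) - 1 / ρ)
          (1 / ρ - (lam ⟨n - 1, by omega⟩) ^ 2 / (∑ j, (lam (emb j)) ^ 2)) := by
  intro ℓ
  have : Nonempty (Fin ρ) := ⟨⟨0, hρ⟩⟩
  set S := ∑ j, lam (emb j) ^ 2
  have hS : 0 < S := sum_pos (fun j _ => pow_pos (hlampos _) 2) univ_nonempty
  have hX_sq : ∀ i j, X i j ^ 2 = z * (U i (emb j) * lam (emb j)) ^ 2 := fun i j => by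
    rw [hX, Matrix.smul_apply, mul_submatrix_apply_of_svd hV hD hΨ, smul_eq_mul, mul_pow,
      Real.sq_sqrt hz.le]
  have hξr_eq : ξr ℓ = ∑ j, U ℓ (emb j) ^ 2 * (lam (emb j) ^ 2 / S) := by
    have hfrob : ∑ i, ∑ j, X i j ^ 2 = z * S := by
      simp only [hX_sq, ← mul_sum, sum_sum_sq_mul_eq_of_transpose_mul_self hU, S]
    rw [hξr, hfrob]
    simp only [hX_sq, ← mul_sum, mul_div_mul_left _ _ hz.ne', sum_div, mul_pow, mul_div_assoc]
  have hemb_inj : Function.Injective emb := fun a b hab => by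
    have := hemb a; have := hemb b; have := congrArg Fin.val hab; omega
  have hrow : ∑ j, U ℓ (emb j) ^ 2 ≤ 1 :=
    (sum_comp_le_sum_of_injective hemb_inj fun _ => sq_nonneg _).trans
      (sum_sq_row_le_one_of_transpose_mul_self hU ℓ)
  have hw : ∑ j, lam (emb j) ^ 2 / S = 1 := by rw [← sum_div, div_self hS.ne']
  have hsq_div_mono : ∀ {i i' : Fin n}, i ≤ i' → lam i' ^ 2 / S ≤ lam i ^ 2 / S :=
    fun h => div_le_div_of_nonneg_right
      (pow_le_pow_left₀ (hlampos _).le (hlama h) 2) hS.le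
  have bound := abs_sum_mul_sub_sum_div_card_le (fun j => sq_nonneg (U ℓ (emb j))) hrow hw
    (lo := lam ⟨n - 1, by omega⟩ ^ 2 / S) (hi := lam ⟨n - ρ, by omega⟩ ^ 2 / S)
    (fun j => hsq_div_mono (by simp only [Fin.le_def, hemb]; omega))
    (fun j => hsq_div_mono (by simp only [Fin.le_def, hemb]; omega))
  rwa [Fintype.card_fin, ← hξr_eq, ← hξl] at bound
end

section
/- Under the same homogeneous-model setup, the Euclidean distance satisfies ‖ξ^{r(X)} − ξ^{l(X)}‖₂ ≤ sqrt( Σ_{i=n−ρ+1}^n ( λ_i²/Σ_{j=n−ρ+1}^n λ_j² − 1/ρ )² ). -/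
/-!
Write `W` for the columns `emb` of `U` and `μ = lam ∘ emb`. Since `V` is orthogonal,
`X = √z · W diag μ`, so both distributions are mixtures of the squared rows of `W`:
`ξʳ ℓ − ξˡ ℓ = Σⱼ cⱼ W ℓ j²` with `cⱼ = μⱼ²/Σ μ² − 1/ρ`. The columns of `W` are orthonormal,
so every row of `W` has squared norm at most `1`; Cauchy–Schwarz with the weights `W ℓ j²` then
gives `(ξʳ ℓ − ξˡ ℓ)² ≤ Σⱼ cⱼ² W ℓ j²`, and summing over `ℓ` (columns of norm `1`) leaves `Σⱼ cⱼ²`.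
-/

open Matrix Finset

namespace Matrix

section OrthonormalColumns

variable {m k : Type*} {W : Matrix m k ℝ}

lemma sum_sq_col_eq_one [Fintype m] [DecidableEq k] (hW : Wᵀ * W = 1) (j : k) :
    ∑ ℓ, W ℓ j ^ 2 = 1 := by
  simpa [mul_apply, sq] using congrFun (congrFun hW j) j

/-- `W Wᵀ` is an orthogonal projection, so its diagonal entry `r` satisfies
`r = Σᵢ (W Wᵀ)ℓi² ≥ r²`. -/
lemma sum_sq_row_le_one [Fintype m] [Fintype k] [DecidableEq k] (hW : Wᵀ * W = 1) (ℓ : m) :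
    ∑ j, W ℓ j ^ 2 ≤ 1 := by
  set P := W * Wᵀ
  have hPP : P * P = P := by
    rw [Matrix.mul_assoc, ← Matrix.mul_assoc Wᵀ, hW, Matrix.one_mul]
  have hPsymm : Pᵀ = P := by simp [P, Matrix.transpose_mul]
  have hdiag : ∑ j, W ℓ j ^ 2 = P ℓ ℓ := by simp [P, mul_apply, sq]
  have hrow : P ℓ ℓ = ∑ i, P ℓ i ^ 2 := by
    conv_lhs => rw [← hPP, mul_apply]
    refine sum_congr rfl fun i _ => ?_
    rw [sq, show P i ℓ = P ℓ i from congrFun (congrFun hPsymm ℓ) i]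
  have hsq : P ℓ ℓ ^ 2 ≤ P ℓ ℓ :=
    hrow ▸ single_le_sum (f := fun i => P ℓ i ^ 2) (fun i _ => sq_nonneg _) (mem_univ ℓ)
  rw [hdiag]
  nlinarith [sq_nonneg (P ℓ ℓ)]

lemma sum_sq_sum_mul_sq_le [Fintype m] [Fintype k] [DecidableEq k] (hW : Wᵀ * W = 1)
    (c : k → ℝ) :
    ∑ ℓ, (∑ j, c j * W ℓ j ^ 2) ^ 2 ≤ ∑ j, c j ^ 2 := by
  have hrow : ∀ ℓ, (∑ j, c j * W ℓ j ^ 2) ^ 2 ≤ ∑ j, c j ^ 2 * W ℓ j ^ 2 := fun ℓ =>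
    calc (∑ j, c j * W ℓ j ^ 2) ^ 2
        ≤ (∑ j, W ℓ j ^ 2) * ∑ j, c j ^ 2 * W ℓ j ^ 2 :=
          sum_sq_le_sum_mul_sum_of_sq_le_mul _ (fun _ _ => sq_nonneg _)
            (fun _ _ => by positivity) (fun _ _ => le_of_eq (by ring))
      _ ≤ ∑ j, c j ^ 2 * W ℓ j ^ 2 :=
          mul_le_of_le_one_left (sum_nonneg fun _ _ => by positivity) (sum_sq_row_le_one hW ℓ)
  calc ∑ ℓ, (∑ j, c j * W ℓ j ^ 2) ^ 2
      ≤ ∑ ℓ, ∑ j, c j ^ 2 * W ℓ j ^ 2 := sum_le_sum fun ℓ _ => hrow ℓ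
    _ = ∑ j, c j ^ 2 := by
      rw [sum_comm]
      simp [← mul_sum, sum_sq_col_eq_one hW]

lemma sum_sq_smul_mul_diagonal_apply [Fintype k] [DecidableEq k] (a : ℝ) (W : Matrix m k ℝ)
    (μ : k → ℝ) (ℓ : m) :
    ∑ j, (a • (W * diagonal μ)) ℓ j ^ 2 = a ^ 2 * ∑ j, μ j ^ 2 * W ℓ j ^ 2 := by
  simp only [smul_apply, mul_diagonal, smul_eq_mul, mul_sum]
  exact sum_congr rfl fun j _ => by ring

lemma sum_sq_smul_mul_diagonal_div_sum [Fintype m] [Fintype k] [DecidableEq k]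
    (hW : Wᵀ * W = 1) {a : ℝ} (ha : a ≠ 0) (μ : k → ℝ) (ℓ : m) :
    (∑ j, (a • (W * diagonal μ)) ℓ j ^ 2) / ∑ ℓ', ∑ j, (a • (W * diagonal μ)) ℓ' j ^ 2 =
      ∑ j, μ j ^ 2 / (∑ i, μ i ^ 2) * W ℓ j ^ 2 := by
  have htotal : ∑ ℓ', ∑ j, (a • (W * diagonal μ)) ℓ' j ^ 2 = a ^ 2 * ∑ j, μ j ^ 2 := by
    simp only [sum_sq_smul_mul_diagonal_apply, ← mul_sum]
    rw [sum_comm]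
    simp [← mul_sum, sum_sq_col_eq_one hW]
  rw [htotal, sum_sq_smul_mul_diagonal_apply, mul_div_mul_left _ _ (pow_ne_zero 2 ha), sum_div]
  exact sum_congr rfl fun j _ => by ring

end OrthonormalColumns

lemma transpose_submatrix_mul_submatrix_of_injective {m n ι : Type*} [Fintype m] [DecidableEq n]
    [DecidableEq ι] {U : Matrix m n ℝ} (hU : Uᵀ * U = 1) {e : ι → n} (he : e.Injective) :
    (U.submatrix id e)ᵀ * U.submatrix id e = 1 := by
  rw [transpose_submatrix, ← submatrix_mul _ _ _ _ _ Function.bijective_id, hU, submatrix_one _ he]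

lemma mul_diagonal_mul_transpose_mul_submatrix {m n ι : Type*} [Fintype n] [DecidableEq n]
    [Fintype ι] [DecidableEq ι] {V : Matrix n n ℝ} (hV : Vᵀ * V = 1) (A : Matrix m n ℝ)
    (d : n → ℝ) (e : ι → n) :
    A * diagonal d * Vᵀ * V.submatrix id e = A.submatrix id e * diagonal (d ∘ e) := by
  rw [Matrix.mul_assoc, ← submatrix_id_id Vᵀ, ← submatrix_mul _ _ _ _ _ Function.bijective_id, hV]
  ext ℓ j
  simp [mul_apply, one_apply, diagonal_apply]

end Matrix

theorem stmt17_general {m n ρ : ℕ}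
    (U : Matrix (Fin m) (Fin n) ℝ) (hU : Uᵀ * U = 1)
    (V : Matrix (Fin n) (Fin n) ℝ) (hV : Vᵀ * V = 1)
    (lam : Fin n → ℝ)
    (D : Matrix (Fin m) (Fin n) ℝ) (hD : D = U * Matrix.diagonal lam * Vᵀ)
    (z : ℝ) (hz : 0 < z)
    (emb : Fin ρ → Fin n) (hemb : ∀ j, (emb j : ℕ) = n - ρ + (j : ℕ))
    (Ψ : Matrix (Fin n) (Fin ρ) ℝ) (hΨ : ∀ i j, Ψ i j = V i (emb j))
    (X : Matrix (Fin m) (Fin ρ) ℝ) (hX : X = Real.sqrt z • (D * Ψ))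
    (ξl ξr : Fin m → ℝ)
    (hξl : ∀ ℓ, ξl ℓ = (∑ j, (U ℓ (emb j)) ^ 2) / ρ)
    (hξr : ∀ ℓ, ξr ℓ = (∑ j, X ℓ j ^ 2) / (∑ ℓ', ∑ j, X ℓ' j ^ 2)) :
    Real.sqrt (∑ ℓ, (ξr ℓ - ξl ℓ) ^ 2) ≤
      Real.sqrt (∑ i : Fin ρ,
        ((lam (emb i)) ^ 2 / (∑ j, (lam (emb j)) ^ 2) - 1 / ρ) ^ 2) := by
  have hemb_inj : emb.Injective := fun a b hab => by
    have := congrArg Fin.val hab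
    rw [hemb a, hemb b] at this
    exact Fin.ext (by omega)
  set W := U.submatrix id emb
  have hW : Wᵀ * W = 1 := transpose_submatrix_mul_submatrix_of_injective hU hemb_inj
  have hXW : X = Real.sqrt z • (W * diagonal (lam ∘ emb)) := by
    rw [hX, hD, show Ψ = V.submatrix id emb from Matrix.ext hΨ,
      mul_diagonal_mul_transpose_mul_submatrix hV]
  have hdiff : ∀ ℓ, ξr ℓ - ξl ℓ =
      ∑ j, (lam (emb j) ^ 2 / (∑ i, lam (emb i) ^ 2) - 1 / ρ) * W ℓ j ^ 2 := fun ℓ => by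
    rw [hξr, hξl, hXW, sum_sq_smul_mul_diagonal_div_sum hW (Real.sqrt_pos.2 hz).ne', sum_div,
      ← sum_sub_distrib]
    exact sum_congr rfl fun j _ => by simp only [W, submatrix_apply, id, Function.comp]; ring
  gcongr
  simpa only [hdiff] using sum_sq_sum_mul_sq_le hW _

/-- homogeneous model, Euclidean bound: same setup as Statement 16;
`‖ξʳ − ξˡ‖₂ ≤ sqrt( Σ_{i=n−ρ+1}^n ( λ_i²/Σ_{j=n−ρ+1}^n λ_j² − 1/ρ )² )`. -/
theorem stmt17 {m n ρ : ℕ} (hρ : 0 < ρ) (hρn : ρ ≤ n) (hnm : n ≤ m)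
    (U : Matrix (Fin m) (Fin n) ℝ) (hU : Uᵀ * U = 1)
    (V : Matrix (Fin n) (Fin n) ℝ) (hV : Vᵀ * V = 1)
    (lam : Fin n → ℝ) (hlama : Antitone lam) (hlampos : ∀ i, 0 < lam i)
    (D : Matrix (Fin m) (Fin n) ℝ) (hD : D = U * Matrix.diagonal lam * Vᵀ)
    (z : ℝ) (hz : 0 < z)
    (emb : Fin ρ → Fin n) (hemb : ∀ j, (emb j : ℕ) = n - ρ + (j : ℕ))
    (Ψ : Matrix (Fin n) (Fin ρ) ℝ) (hΨ : ∀ i j, Ψ i j = V i (emb j))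
    (X : Matrix (Fin m) (Fin ρ) ℝ) (hX : X = Real.sqrt z • (D * Ψ))
    (ξl ξr : Fin m → ℝ)
    (hξl : ∀ ℓ, ξl ℓ = (∑ j, (U ℓ (emb j)) ^ 2) / ρ)
    (hξr : ∀ ℓ, ξr ℓ = (∑ j, X ℓ j ^ 2) / (∑ ℓ', ∑ j, X ℓ' j ^ 2)) :
    Real.sqrt (∑ ℓ, (ξr ℓ - ξl ℓ) ^ 2) ≤
      Real.sqrt (∑ i : Fin ρ,
        ((lam (emb i)) ^ 2 / (∑ j, (lam (emb j)) ^ 2) - 1 / ρ) ^ 2) :=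
  stmt17_general U hU V hV lam D hD z hz emb hemb Ψ hΨ X hX ξl ξr hξl hξr
end
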